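/- arXiv:2410.11743 — 5 statements merged into one kernel-verified Lean document; each statement's English description precedes it below -/
import Mathlib

section
/- Under consistency (Y = Y(A)), conditional exchangeability (Y(a) ⫫ A | X for each a), and positivity (P(A = a | X = x) > 0 for all x in the support of X), the counterfactual distribution is identified by the adjustment formula: P(Y(a) ≤ y) = E_X[ P(Y ≤ y | A = a, X) ]. -/
/-!
Stratify on the discrete covariate: `P(Y(a) ≤ y) = ∑ₓ P(X = x) · P(Y(a) ≤ y | X = x)`.
Within the stratum `X = x`, exchangeability makes `{Y(a) ≤ y}` independent of `{A = a}`, so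
conditioning further on `A = a` (possible by positivity) does not change its probability; on
`{A = a}` consistency lets us replace `Y(a)` by the observed `Y`.
-/

open MeasureTheory ProbabilityTheory

namespace ProbabilityTheory

variable {Ω : Type*} [MeasurableSpace Ω] {μ : Measure Ω}

lemma measure_eq_tsum_mul_cond_fiber {α : Type*} [Countable α] [MeasurableSpace α]
    [MeasurableSingletonClass α] [IsFiniteMeasure μ] {X : Ω → α} (hX : Measurable X)
    (t : Set Ω) :
    μ t = ∑' x, μ (X ⁻¹' {x}) * μ[t | X ⁻¹' {x}] := by
  have hfiber : ∀ x, MeasurableSet (X ⁻¹' {x}) := fun x ↦ hX (measurableSet_singleton x)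
  calc μ t = μ.restrict t (⋃ x, X ⁻¹' {x}) := by
        rw [← Set.preimage_iUnion, Set.iUnion_of_singleton, Set.preimage_univ,
          Measure.restrict_apply_univ]
    _ = ∑' x, μ.restrict t (X ⁻¹' {x}) :=
        measure_iUnion (fun _ _ hxy ↦ (Set.disjoint_singleton.2 hxy).preimage X) hfiber
    _ = ∑' x, μ (X ⁻¹' {x}) * μ[t | X ⁻¹' {x}] := by
        refine tsum_congr fun x ↦ ?_
        rw [Measure.restrict_apply (hfiber x), mul_comm, cond_mul_eq_inter (hfiber x),
          Set.inter_comm]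

lemma IndepFun.cond_preimage_eq {β γ : Type*} [MeasurableSpace β] [MeasurableSpace γ]
    [IsFiniteMeasure μ] {f : Ω → β} {g : Ω → γ} (hfg : IndepFun f g μ) (hg : Measurable g)
    {s : Set β} {t : Set γ} (hs : MeasurableSet s) (ht : MeasurableSet t)
    (hgt : μ (g ⁻¹' t) ≠ 0) :
    μ[f ⁻¹' s | g ⁻¹' t] = μ (f ⁻¹' s) := by
  rw [cond_apply (hg ht), Set.inter_comm, hfg.measure_inter_preimage_eq_mul s t hs ht, mul_comm,
    mul_assoc, ENNReal.mul_inv_cancel hgt (measure_ne_top μ _), mul_one]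

lemma cond_preimage_eq_cond_inter_of_indepFun {β γ : Type*} [MeasurableSpace β]
    [MeasurableSpace γ] [IsFiniteMeasure μ] {f : Ω → β} {g : Ω → γ} {M : Set Ω}
    (hM : MeasurableSet M) (hfg : IndepFun f g μ[|M]) (hg : Measurable g)
    {s : Set β} {t : Set γ} (hs : MeasurableSet s) (ht : MeasurableSet t)
    (hgtM : μ (g ⁻¹' t ∩ M) ≠ 0) :
    μ[f ⁻¹' s | M] = μ[f ⁻¹' s | g ⁻¹' t ∩ M] := by
  have hcond_pos : μ[g ⁻¹' t | M] ≠ 0 :=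
    (cond_pos_of_inter_ne_zero hM (by rwa [Set.inter_comm])).ne'
  rw [← hfg.cond_preimage_eq hg hs ht hcond_pos, cond_cond_eq_cond_inter hM (hg ht),
    Set.inter_comm]

lemma cond_preimage_congr_of_ae_eq_on {β : Type*} {f g : Ω → β} {s : Set Ω}
    (hs : MeasurableSet s) (hfg : ∀ᵐ ω ∂μ, ω ∈ s → f ω = g ω) (t : Set β) :
    μ[f ⁻¹' t | s] = μ[g ⁻¹' t | s] := by
  have hae : f =ᵐ[μ[|s]] g := by
    filter_upwards [ae_cond_mem hs, cond_absolutelyContinuous.ae_le hfg] with ω hω hfgω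
    exact hfgω hω
  exact measure_congr (hae.preimage t)

end ProbabilityTheory

theorem stmt_2_general {Ω : Type*} [MeasurableSpace Ω] (μ : Measure Ω) [IsProbabilityMeasure μ]
    (A : Ω → ℕ) (X : Ω → ℕ) (Y : Ω → ℝ) (Ycf : ℕ → Ω → ℝ)  -- Ycf a = counterfactual Y(a)
    (hA : Measurable A) (hX : Measurable X)
    (a : ℕ)
    -- consistency: Y = Y(a) a.s. on {A = a}
    (hcons : ∀ᵐ ω ∂μ, Y ω = Ycf (A ω) ω)
    -- conditional exchangeability: Y(a) ⫫ A given X = x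
    (hexch : ∀ x : ℕ, 0 < μ {ω | X ω = x} →
      IndepFun (Ycf a) A (μ[|{ω | X ω = x}]))
    -- positivity
    (hposit : ∀ x : ℕ, 0 < μ {ω | X ω = x} → 0 < μ {ω | A ω = a ∧ X ω = x})
    (y : ℝ) :
    μ {ω | Ycf a ω ≤ y} =
      ∑' x : ℕ, μ {ω | X ω = x} * μ[|{ω | A ω = a ∧ X ω = x}] {ω | Y ω ≤ y} := by
  rw [measure_eq_tsum_mul_cond_fiber (μ := μ) hX]
  refine tsum_congr fun x ↦ ?_
  show μ (X ⁻¹' {x}) * μ[Ycf a ⁻¹' Set.Iic y | X ⁻¹' {x}]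
    = μ (X ⁻¹' {x}) * μ[Y ⁻¹' Set.Iic y | A ⁻¹' {a} ∩ X ⁻¹' {x}]
  have hfiber : MeasurableSet (X ⁻¹' {x}) := hX (measurableSet_singleton x)
  rcases eq_zero_or_pos (μ (X ⁻¹' {x})) with hx | hx
  · rw [hx, zero_mul, zero_mul]
  have hconsistent : ∀ᵐ ω ∂μ, ω ∈ A ⁻¹' {a} ∩ X ⁻¹' {x} → Y ω = Ycf a ω := by
    filter_upwards [hcons] with ω hω hmem
    rw [hω, hmem.1]
  congr 1
  calc μ[Ycf a ⁻¹' Set.Iic y | X ⁻¹' {x}]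
      = μ[Ycf a ⁻¹' Set.Iic y | A ⁻¹' {a} ∩ X ⁻¹' {x}] :=
        cond_preimage_eq_cond_inter_of_indepFun hfiber (hexch x hx) hA measurableSet_Iic
          (measurableSet_singleton a) (hposit x hx).ne'
    _ = μ[Y ⁻¹' Set.Iic y | A ⁻¹' {a} ∩ X ⁻¹' {x}] :=
        (cond_preimage_congr_of_ae_eq_on ((hA (measurableSet_singleton a)).inter hfiber)
          hconsistent _).symm

/-- Adjustment formula. Under consistency (`Y = Y(A)` a.s.),
conditional exchangeability (`Y(a) ⫫ A | X`, formalized by independence under each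
conditional measure `μ[|X = x]` for the discrete covariate `X`), and positivity
(`P(A = a, X = x) > 0` whenever `P(X = x) > 0`), the counterfactual distribution is
identified: `P(Y(a) ≤ y) = ∑_x P(X = x) · P(Y ≤ y | A = a, X = x)`. -/
theorem stmt_2 {Ω : Type*} [MeasurableSpace Ω] (μ : Measure Ω) [IsProbabilityMeasure μ]
    (A : Ω → ℕ) (X : Ω → ℕ) (Y : Ω → ℝ) (Ycf : ℕ → Ω → ℝ)  -- Ycf a = counterfactual Y(a)
    (hA : Measurable A) (hX : Measurable X) (hY : Measurable Y)
    (hYcf : ∀ a, Measurable (Ycf a))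
    (a : ℕ) (ha : a = 0 ∨ a = 1)  -- binary treatment
    -- consistency: Y = Y(a) a.s. on {A = a}
    (hcons : ∀ᵐ ω ∂μ, Y ω = Ycf (A ω) ω)
    -- conditional exchangeability: Y(a) ⫫ A given X = x
    (hexch : ∀ x : ℕ, 0 < μ {ω | X ω = x} →
      IndepFun (Ycf a) A (μ[|{ω | X ω = x}]))
    -- positivity
    (hposit : ∀ x : ℕ, 0 < μ {ω | X ω = x} → 0 < μ {ω | A ω = a ∧ X ω = x})
    (y : ℝ) :
    μ {ω | Ycf a ω ≤ y} =
      ∑' x : ℕ, μ {ω | X ω = x} * μ[|{ω | A ω = a ∧ X ω = x}] {ω | Y ω ≤ y} :=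
  stmt_2_general μ A X Y Ycf hA hX a hcons hexch hposit y
end

section
/- Two-time-point g-formula: under sequential consistency, sequential exchangeability (Y2(a1,a2) ⫫ A1 and Y2(a1,a2) ⫫ A2 | (A1, Y1)), and positivity, the density of the counterfactual Y2(a1,a2) equals ∫ p(y2 | a1, y1, a2) p(y1 | a1) dy1. -/
open MeasureTheory ProbabilityTheory

/-! By consistency, on `{A1 = a1, Y1 = y1, A2 = a2}` the observed `Y2` is `Y2(a1,a2)` a.s., so the
independence of `Y2(a1,a2)` and `A2` given `{A1 = a1, Y1 = y1}` turns
`p(y2 | a1,y1,a2) p(a1,y1)` into `P(Y2(a1,a2) = y2, A1 = a1, Y1 = y1)`. Summing over `y1` gives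
`P(Y2(a1,a2) = y2, A1 = a1)`, which is `P(Y2(a1,a2) = y2) P(A1 = a1)` since `Y2(a1,a2)` and `A1`
are independent. -/

section

variable {Ω α β γ δ : Type*} [MeasurableSpace Ω] {μ : Measure Ω}

theorem preimage_inter_ae_eq_of_consistency {A : Ω → α} {Y : Ω → β} {Ycf : α → Ω → β}
    (h : ∀ᵐ ω ∂μ, Y ω = Ycf (A ω) ω) (a : α) (s : Set β) :
    (A ⁻¹' {a} ∩ Y ⁻¹' s : Set Ω) =ᵐ[μ] (A ⁻¹' {a} ∩ Ycf a ⁻¹' s : Set Ω) := by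
  filter_upwards [h] with ω hω
  change (A ω = a ∧ Y ω ∈ s) = (A ω = a ∧ Ycf a ω ∈ s)
  rw [hω]
  exact propext (and_congr_right fun ha => by rw [ha])

theorem measure_inter_inter_mul_measure_of_indepFun_cond [IsFiniteMeasure μ]
    [MeasurableSpace α] [MeasurableSpace β] {X : Ω → α} {Y : Ω → β} {B : Set Ω}
    (hB : MeasurableSet B) (h : IndepFun X Y μ[|B]) {s : Set α} {t : Set β}
    (hs : MeasurableSet s) (ht : MeasurableSet t) :
    μ (B ∩ (X ⁻¹' s ∩ Y ⁻¹' t)) * μ B = μ (B ∩ X ⁻¹' s) * μ (B ∩ Y ⁻¹' t) := by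
  rw [← cond_mul_eq_inter hB, ← cond_mul_eq_inter hB, ← cond_mul_eq_inter hB,
    h.measure_inter_preimage_eq_mul s t hs ht]
  ring

theorem tsum_measureReal_inter_preimage_singleton [IsFiniteMeasure μ] [MeasurableSpace α]
    [Countable α] [MeasurableSingletonClass α] {f : Ω → α} (hf : Measurable f) (s : Set Ω) :
    ∑' a, μ.real (s ∩ f ⁻¹' {a}) = μ.real s := by
  have h := tsum_measure_preimage_singleton (μ := μ.restrict s) Set.countable_univ
    fun a _ => hf (measurableSet_singleton a)
  simp only [Set.preimage_univ, Measure.restrict_apply_univ,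
    Measure.restrict_apply (hf (measurableSet_singleton _)), Set.inter_comm] at h
  rw [tsum_univ (f := fun a => μ (s ∩ f ⁻¹' {a}))] at h
  simp only [measureReal_def, ← h, ENNReal.tsum_toReal_eq fun _ => measure_ne_top μ _]

theorem condProb_mul_measureReal_eq_counterfactual [IsFiniteMeasure μ]
    [MeasurableSpace α] [MeasurableSingletonClass α] [MeasurableSpace β] [MeasurableSingletonClass β]
    [MeasurableSpace γ] [MeasurableSingletonClass γ] [MeasurableSpace δ] [MeasurableSingletonClass δ]
    {A1 : Ω → α} {Y1 : Ω → β} {A2 : Ω → γ} {Y2 : Ω → δ} {Y2cf : α → γ → Ω → δ}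
    (hA1 : Measurable A1) (hY1 : Measurable Y1)
    (hcons : ∀ᵐ ω ∂μ, Y2 ω = Y2cf (A1 ω) (A2 ω) ω) {a1 : α} {y1 : β} {a2 : γ} {y2 : δ}
    (hexch : 0 < μ {ω | A1 ω = a1 ∧ Y1 ω = y1} →
      IndepFun (Y2cf a1 a2) A2 (μ[|{ω | A1 ω = a1 ∧ Y1 ω = y1}]))
    (hpos : 0 < μ {ω | A1 ω = a1 ∧ Y1 ω = y1} →
      0 < μ {ω | A1 ω = a1 ∧ Y1 ω = y1 ∧ A2 ω = a2}) :
    μ.real {ω | A1 ω = a1 ∧ Y1 ω = y1 ∧ A2 ω = a2 ∧ Y2 ω = y2} /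
        μ.real {ω | A1 ω = a1 ∧ Y1 ω = y1 ∧ A2 ω = a2} * μ.real {ω | A1 ω = a1 ∧ Y1 ω = y1} =
      μ.real (Y2cf a1 a2 ⁻¹' {y2} ∩ A1 ⁻¹' {a1} ∩ Y1 ⁻¹' {y1}) := by
  set B := {ω | A1 ω = a1 ∧ Y1 ω = y1}
  have hQB : Y2cf a1 a2 ⁻¹' {y2} ∩ A1 ⁻¹' {a1} ∩ Y1 ⁻¹' {y1} = B ∩ Y2cf a1 a2 ⁻¹' {y2} := by
    ext ω; simp only [B, Set.mem_inter_iff, Set.mem_preimage, Set.mem_singleton_iff,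
      Set.mem_ofPred_eq]; tauto
  by_cases hB0 : μ.real B = 0
  · rw [hQB, hB0, mul_zero, measureReal_mono_null Set.inter_subset_left hB0]
  have hBpos : 0 < μ B := pos_iff_ne_zero.mpr ((measureReal_ne_zero_iff).mp hB0)
  have hBm : MeasurableSet B :=
    (hA1 (measurableSet_singleton a1)).inter (hY1 (measurableSet_singleton y1))
  have hD : ({ω | A1 ω = a1 ∧ Y1 ω = y1 ∧ A2 ω = a2 ∧ Y2 ω = y2} : Set Ω) =ᵐ[μ]
      (B ∩ (Y2cf a1 a2 ⁻¹' {y2} ∩ A2 ⁻¹' {a2}) : Set Ω) := by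
    have h := (preimage_inter_ae_eq_of_consistency (A := fun ω => (A1 ω, A2 ω))
      (Ycf := fun a => Y2cf a.1 a.2) hcons (a1, a2) {y2}).inter
      (Filter.EventuallyEq.refl _ (Y1 ⁻¹' {y1}))
    refine (Filter.EventuallyEq.of_eq ?_).trans (h.trans (Filter.EventuallyEq.of_eq ?_)) <;>
      refine Set.ext fun ω => ?_ <;> simp [B, Prod.ext_iff] <;> tauto
  have hC : B ∩ A2 ⁻¹' {a2} = {ω | A1 ω = a1 ∧ Y1 ω = y1 ∧ A2 ω = a2} := by
    ext ω; simp [B, and_assoc]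
  have hmul := measure_inter_inter_mul_measure_of_indepFun_cond hBm (hexch hBpos)
    (measurableSet_singleton y2) (measurableSet_singleton a2)
  rw [hC] at hmul
  have hCpos : μ.real {ω | A1 ω = a1 ∧ Y1 ω = y1 ∧ A2 ω = a2} ≠ 0 :=
    (measureReal_ne_zero_iff).mpr (hpos hBpos).ne'
  rw [div_mul_eq_mul_div, div_eq_iff hCpos, hQB]
  simp only [measureReal_def, ← ENNReal.toReal_mul, measure_congr hD, hmul]

end

theorem stmt_3_general {Ω : Type*} [MeasurableSpace Ω] (μ : Measure Ω) [IsProbabilityMeasure μ]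
    (A1 Y1 A2 Y2 : Ω → ℕ)
    (Y2cf : ℕ → ℕ → Ω → ℕ)        -- counterfactual Y2(a1, a2)
    (hA1 : Measurable A1) (hY1 : Measurable Y1)
    -- sequential consistency: Y1 = Y1(A1) and Y2 = Y2(A1, A2) a.s.
    (hcons2 : ∀ᵐ ω ∂μ, Y2 ω = Y2cf (A1 ω) (A2 ω) ω)
    (a1 a2 : ℕ)
    -- sequential exchangeability
    (hexch1 : IndepFun (Y2cf a1 a2) A1 μ)
    (hexch2 : ∀ y1 : ℕ, 0 < μ {ω | A1 ω = a1 ∧ Y1 ω = y1} →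
      IndepFun (Y2cf a1 a2) A2 (μ[|{ω | A1 ω = a1 ∧ Y1 ω = y1}]))
    -- positivity of treatment probabilities given the past
    (hpos1 : 0 < μ {ω | A1 ω = a1})
    (hpos2 : ∀ y1 : ℕ, 0 < μ {ω | A1 ω = a1 ∧ Y1 ω = y1} →
      0 < μ {ω | A1 ω = a1 ∧ Y1 ω = y1 ∧ A2 ω = a2})
    (y2 : ℕ) :
    (μ {ω | Y2cf a1 a2 ω = y2}).toReal =
      ∑' y1 : ℕ,
        ((μ {ω | A1 ω = a1 ∧ Y1 ω = y1 ∧ A2 ω = a2 ∧ Y2 ω = y2}).toReal /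
            (μ {ω | A1 ω = a1 ∧ Y1 ω = y1 ∧ A2 ω = a2}).toReal) *
          ((μ {ω | A1 ω = a1 ∧ Y1 ω = y1}).toReal / (μ {ω | A1 ω = a1}).toReal) := by
  simp only [← measureReal_def]
  have hA1pos : μ.real (A1 ⁻¹' {a1}) ≠ 0 := (measureReal_ne_zero_iff).mpr hpos1.ne'
  have hindep : μ.real (Y2cf a1 a2 ⁻¹' {y2} ∩ A1 ⁻¹' {a1}) =
      μ.real (Y2cf a1 a2 ⁻¹' {y2}) * μ.real (A1 ⁻¹' {a1}) := by
    simp only [measureReal_def, ← ENNReal.toReal_mul,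
      hexch1.measure_inter_preimage_eq_mul _ _ (measurableSet_singleton y2)
        (measurableSet_singleton a1)]
  calc μ.real (Y2cf a1 a2 ⁻¹' {y2})
      = μ.real (Y2cf a1 a2 ⁻¹' {y2} ∩ A1 ⁻¹' {a1}) / μ.real (A1 ⁻¹' {a1}) := by
        rw [hindep, mul_div_cancel_right₀ _ hA1pos]
    _ = ∑' y1, μ.real (Y2cf a1 a2 ⁻¹' {y2} ∩ A1 ⁻¹' {a1} ∩ Y1 ⁻¹' {y1}) /
          μ.real (A1 ⁻¹' {a1}) := by
        rw [tsum_div_const, tsum_measureReal_inter_preimage_singleton hY1]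
    _ = _ := tsum_congr fun y1 => by
        rw [mul_div_assoc', condProb_mul_measureReal_eq_counterfactual hA1 hY1 hcons2
          (hexch2 y1) (hpos2 y1)]
        rfl

/-- Two-time-point g-formula for discrete variables (pmfs). Under
sequential consistency, sequential exchangeability (`Y2(a1,a2) ⫫ A1` and
`Y2(a1,a2) ⫫ A2 | (A1, Y1)`), and positivity, the pmf of the counterfactual
`Y2(a1,a2)` satisfies
`P(Y2(a1,a2) = y2) = ∑_{y1} p(y2 | a1, y1, a2) · p(y1 | a1)`,
where the conditional pmfs are ratios of joint pmfs. -/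
theorem stmt_3 {Ω : Type*} [MeasurableSpace Ω] (μ : Measure Ω) [IsProbabilityMeasure μ]
    (A1 Y1 A2 Y2 : Ω → ℕ)
    (Y1cf : ℕ → Ω → ℕ)            -- counterfactual Y1(a1)
    (Y2cf : ℕ → ℕ → Ω → ℕ)        -- counterfactual Y2(a1, a2)
    (hA1 : Measurable A1) (hY1 : Measurable Y1) (hA2 : Measurable A2) (hY2 : Measurable Y2)
    (hY1cf : ∀ a1, Measurable (Y1cf a1)) (hY2cf : ∀ a1 a2, Measurable (Y2cf a1 a2))
    -- sequential consistency: Y1 = Y1(A1) and Y2 = Y2(A1, A2) a.s.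
    (hcons1 : ∀ᵐ ω ∂μ, Y1 ω = Y1cf (A1 ω) ω)
    (hcons2 : ∀ᵐ ω ∂μ, Y2 ω = Y2cf (A1 ω) (A2 ω) ω)
    (a1 a2 : ℕ)
    -- sequential exchangeability
    (hexch1 : IndepFun (Y2cf a1 a2) A1 μ)
    (hexch2 : ∀ y1 : ℕ, 0 < μ {ω | A1 ω = a1 ∧ Y1 ω = y1} →
      IndepFun (Y2cf a1 a2) A2 (μ[|{ω | A1 ω = a1 ∧ Y1 ω = y1}]))
    -- positivity of treatment probabilities given the past
    (hpos1 : 0 < μ {ω | A1 ω = a1})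
    (hpos2 : ∀ y1 : ℕ, 0 < μ {ω | A1 ω = a1 ∧ Y1 ω = y1} →
      0 < μ {ω | A1 ω = a1 ∧ Y1 ω = y1 ∧ A2 ω = a2})
    (y2 : ℕ) :
    (μ {ω | Y2cf a1 a2 ω = y2}).toReal =
      ∑' y1 : ℕ,
        ((μ {ω | A1 ω = a1 ∧ Y1 ω = y1 ∧ A2 ω = a2 ∧ Y2 ω = y2}).toReal /
            (μ {ω | A1 ω = a1 ∧ Y1 ω = y1 ∧ A2 ω = a2}).toReal) *
          ((μ {ω | A1 ω = a1 ∧ Y1 ω = y1}).toReal / (μ {ω | A1 ω = a1}).toReal) :=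
  stmt_3_general μ A1 Y1 A2 Y2 Y2cf hA1 hY1 hcons2 a1 a2 hexch1 hexch2 hpos1 hpos2 y2
end

section
/- MSM estimating equation unbiasedness: if ψ(ā_t; θ0) = E[Y_t(ā_t)] for the true parameter θ0, then under sequential exchangeability, consistency and positivity, E[ h_t(Ā_t) (Y_t − ψ(Ā_t; θ0)) W_t ] = 0, where W_t = Π_{s=1}^t π(A_s | Ā_{s−1}) / π(A_s | Ā_{s−1}, X̄_s, Ȳ_{s−1}). -/
open MeasureTheory ProbabilityTheory

/-!
Split `Ω` into the cells `{A = a, X = x}`. On a cell, consistency replaces `Y` by `Y(a)`, and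
exchangeability given `X = x` factors the integral of `Y(a) - ψ(a)` over the cell as
`π(a | x)` times its integral over `{X = x}`. The weight `π(a) / π(a | x)` cancels `π(a | x)`
(positivity makes it nonzero on every cell that matters), leaving
`h(a) π(a) ∫_{X = x} (Y(a) - ψ(a))`. Summing over `x` gives `h(a) π(a) (E[Y(a)] - ψ(a)) = 0`
for every treatment `a`.
-/

section

variable {Ω α β : Type*} [MeasurableSpace Ω] {μ : Measure Ω}

theorem hasSum_setIntegral_preimage_singleton {ι E : Type*} [NormedAddCommGroup E]
    [NormedSpace ℝ E] [Countable ι] [MeasurableSpace ι] [MeasurableSingletonClass ι]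
    {f : Ω → ι} (hf : Measurable f) {g : Ω → E} (hg : Integrable g μ) :
    HasSum (fun i => ∫ ω in f ⁻¹' {i}, g ω ∂μ) (∫ ω, g ω ∂μ) := by
  have h := hasSum_integral_iUnion (fun i => hf (measurableSet_singleton i))
    (fun i j hij => (Set.disjoint_singleton.2 hij).preimage f) hg.integrableOn
  rwa [← Set.preimage_iUnion, Set.iUnion_of_singleton, Set.preimage_univ,
    setIntegral_univ] at h

theorem setIntegral_cond {s : Set Ω} (hs : MeasurableSet s) (t : Set Ω) (f : Ω → ℝ) :
    ∫ ω in t, f ω ∂μ[|s] = (μ.real s)⁻¹ * ∫ ω in t ∩ s, f ω ∂μ := by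
  rw [ProbabilityTheory.cond, Measure.restrict_smul, Measure.restrict_restrict' hs,
    integral_smul_measure, ENNReal.toReal_inv, smul_eq_mul, measureReal_def]

theorem ProbabilityTheory.IndepFun.setIntegral_preimage [MeasurableSpace β] {Z : Ω → ℝ}
    {T : Ω → β}
    (hind : IndepFun Z T μ) (hZ : AEStronglyMeasurable Z μ) (hT : Measurable T)
    {t : Set β} (ht : MeasurableSet t) :
    ∫ ω in T ⁻¹' t, Z ω ∂μ = μ.real (T ⁻¹' t) * ∫ ω, Z ω ∂μ := by
  have hind' : IndepFun Z (fun ω => t.indicator (1 : β → ℝ) (T ω)) μ :=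
    hind.comp measurable_id (measurable_one.indicator ht)
  have hpre : (fun ω => t.indicator (1 : β → ℝ) (T ω)) = (T ⁻¹' t).indicator 1 :=
    funext fun ω => (Set.indicator_comp_right T).symm
  calc ∫ ω in T ⁻¹' t, Z ω ∂μ = ∫ ω, Z ω * (T ⁻¹' t).indicator 1 ω ∂μ := by
        simp_rw [← integral_indicator (hT ht), ← smul_eq_mul, Set.smul_indicator_one_apply]
        rfl
    _ = μ.real (T ⁻¹' t) * ∫ ω, Z ω ∂μ := by
        rw [← hpre, hind'.integral_fun_mul_eq_mul_integral hZ
          ((measurable_one.indicator ht).comp hT).aestronglyMeasurable, hpre,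
          integral_indicator_one (hT ht), mul_comm]

theorem setIntegral_inter_eq_of_indepFun_cond [IsFiniteMeasure μ] [MeasurableSpace β]
    {s : Set Ω} (hs : MeasurableSet s) (hμs : μ s ≠ 0) {Z : Ω → ℝ} {T : Ω → β}
    (hind : IndepFun Z T μ[|s]) (hZ : Measurable Z) (hT : Measurable T)
    {t : Set β} (ht : MeasurableSet t) :
    ∫ ω in T ⁻¹' t ∩ s, Z ω ∂μ = μ.real (T ⁻¹' t ∩ s) / μ.real s * ∫ ω in s, Z ω ∂μ := by
  have h := hind.setIntegral_preimage hZ.aestronglyMeasurable hT ht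
  have hμs' : μ.real s ≠ 0 := (measureReal_ne_zero_iff (measure_ne_top μ s)).2 hμs
  have hcond_meas : (μ[|s]).real (T ⁻¹' t) = (μ.real s)⁻¹ * μ.real (T ⁻¹' t ∩ s) := by
    rw [measureReal_def, cond_apply' (hT ht), ENNReal.toReal_mul, ENNReal.toReal_inv,
      Set.inter_comm, measureReal_def, measureReal_def]
  have hcond_int : ∫ ω, Z ω ∂μ[|s] = (μ.real s)⁻¹ * ∫ ω in s, Z ω ∂μ := by
    simpa using setIntegral_cond hs Set.univ Z
  rw [setIntegral_cond hs, hcond_meas, hcond_int] at h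
  field_simp at h ⊢
  linear_combination h

section Cell

variable [MeasurableSpace α] [MeasurableSingletonClass α] [MeasurableSpace β]
  [MeasurableSingletonClass β] {A : Ω → α} {X : Ω → β}

/-- `π(a) / π(a | x)`. On cells of probability zero Lean's division makes it `0`. -/
noncomputable def stabilizedWeight (μ : Measure Ω) (A : Ω → α) (X : Ω → β) (a : α) (x : β) : ℝ :=
  μ.real {ω | A ω = a} / (μ.real {ω | A ω = a ∧ X ω = x} / μ.real {ω | X ω = x})

theorem setIntegral_cell_mul_stabilizedWeight [IsFiniteMeasure μ] (hA : Measurable A)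
    (hX : Measurable X) {Y : Ω → ℝ} {Ycf : α → Ω → ℝ} (h ψ : α → ℝ) {a : α} {x : β}
    (hYcf : Measurable (Ycf a)) (hcons : ∀ᵐ ω ∂μ, Y ω = Ycf (A ω) ω)
    (hexch : 0 < μ {ω | X ω = x} → IndepFun (Ycf a) A μ[|{ω | X ω = x}])
    (hoverlap : μ {ω | X ω = x} ≠ 0 → μ {ω | A ω = a} ≠ 0 →
      μ {ω | A ω = a ∧ X ω = x} ≠ 0) :
    ∫ ω in {ω | A ω = a ∧ X ω = x},
        h (A ω) * (Y ω - ψ (A ω)) * stabilizedWeight μ A X (A ω) (X ω) ∂μ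
      = h a * μ.real {ω | A ω = a} * ∫ ω in {ω | X ω = x}, (Ycf a ω - ψ a) ∂μ := by
  have hXx : MeasurableSet {ω | X ω = x} := hX (measurableSet_singleton x)
  by_cases hx : μ {ω | X ω = x} = 0
  · rw [Measure.restrict_eq_zero.2 hx,
      Measure.restrict_eq_zero.2 (measure_mono_null (fun ω hω => hω.2) hx)]
    simp
  by_cases ha : μ {ω | A ω = a} = 0
  · rw [Measure.restrict_eq_zero.2 (measure_mono_null (fun ω hω => hω.1) ha),
      measureReal_def, ha]
    simp
  have hcell : μ.real {ω | A ω = a ∧ X ω = x} ≠ 0 :=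
    (measureReal_ne_zero_iff (measure_ne_top μ _)).2 (hoverlap hx ha)
  have hx' : μ.real {ω | X ω = x} ≠ 0 := (measureReal_ne_zero_iff (measure_ne_top μ _)).2 hx
  have hfactor : ∫ ω in {ω | A ω = a ∧ X ω = x}, (Ycf a ω - ψ a) ∂μ
      = μ.real {ω | A ω = a ∧ X ω = x} / μ.real {ω | X ω = x}
        * ∫ ω in {ω | X ω = x}, (Ycf a ω - ψ a) ∂μ :=
    setIntegral_inter_eq_of_indepFun_cond hXx hx
      ((hexch (pos_iff_ne_zero.2 hx)).comp (measurable_id.sub_const _) measurable_id)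
      (hYcf.sub_const _) hA (measurableSet_singleton a)
  calc _ = ∫ ω in {ω | A ω = a ∧ X ω = x},
          h a * stabilizedWeight μ A X a x * (Ycf a ω - ψ a) ∂μ := by
        refine setIntegral_congr_ae ((hA (measurableSet_singleton a)).inter hXx) ?_
        filter_upwards [hcons] with ω hω ⟨hωa, hωx⟩
        rw [hω, hωa, hωx]
        ring
    _ = _ := by
        rw [integral_const_mul, hfactor, stabilizedWeight]
        field_simp

theorem hasSum_setIntegral_cell_mul_stabilizedWeight [IsProbabilityMeasure μ] [Countable β]
    (hA : Measurable A) (hX : Measurable X) {Y : Ω → ℝ} {Ycf : α → Ω → ℝ} (h ψ : α → ℝ) {a : α}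
    (hYcf : Measurable (Ycf a)) (hYcf_int : Integrable (Ycf a) μ) (hψ : ψ a = ∫ ω, Ycf a ω ∂μ)
    (hcons : ∀ᵐ ω ∂μ, Y ω = Ycf (A ω) ω)
    (hexch : ∀ x, 0 < μ {ω | X ω = x} → IndepFun (Ycf a) A μ[|{ω | X ω = x}])
    (hoverlap : ∀ x, μ {ω | X ω = x} ≠ 0 → μ {ω | A ω = a} ≠ 0 →
      μ {ω | A ω = a ∧ X ω = x} ≠ 0) :
    HasSum (fun x => ∫ ω in {ω | A ω = a ∧ X ω = x},
      h (A ω) * (Y ω - ψ (A ω)) * stabilizedWeight μ A X (A ω) (X ω) ∂μ) 0 := by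
  have hcentered : ∫ ω, (Ycf a ω - ψ a) ∂μ = 0 := by
    rw [integral_sub hYcf_int (integrable_const _), ← hψ]
    simp
  have hsum := (hasSum_setIntegral_preimage_singleton (g := fun ω => Ycf a ω - ψ a) hX
    (hYcf_int.sub (integrable_const (ψ a)))).mul_left (h a * μ.real {ω | A ω = a})
  rw [hcentered, mul_zero] at hsum
  simp only [setIntegral_cell_mul_stabilizedWeight hA hX h ψ hYcf hcons (hexch _) (hoverlap _)]
  exact hsum

end Cell

end

theorem stmt_6_general {Ω : Type*} [MeasurableSpace Ω] (μ : Measure Ω) [IsProbabilityMeasure μ]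
    (X A : Ω → ℕ) (Y : Ω → ℝ) (Ycf : ℕ → Ω → ℝ)
    (hX : Measurable X) (hA : Measurable A)
    (hYcf : ∀ a, Measurable (Ycf a))
    (h : ℕ → ℝ)              -- arbitrary bounded function of the treatment
    (ψ : ℕ → ℝ)              -- marginal structural model at the true parameter
    (C : ℝ)
    (hYcfbd : ∀ a, ∀ᵐ ω ∂μ, |Ycf a ω| ≤ C)
    -- ψ is the true counterfactual mean
    (hψ : ∀ a, ψ a = ∫ ω, Ycf a ω ∂μ)
    -- consistency: Y = Y(A) a.s.
    (hcons : ∀ᵐ ω ∂μ, Y ω = Ycf (A ω) ω)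
    -- exchangeability: Y(a) ⫫ A given X = x
    (hexch : ∀ a x : ℕ, 0 < μ {ω | X ω = x} →
      IndepFun (Ycf a) A (μ[|{ω | X ω = x}]))
    -- positivity: propensity scores bounded below by ε > 0
    (ε : ℝ) (hε : 0 < ε)
    (hpos : ∀ x : ℕ, 0 < μ {ω | X ω = x} → ∀ a : ℕ, 0 < μ {ω | A ω = a} →
      ε ≤ (μ {ω | A ω = a ∧ X ω = x}).toReal / (μ {ω | X ω = x}).toReal) :
    ∫ ω, h (A ω) * (Y ω - ψ (A ω)) *
        ((μ {ω' | A ω' = A ω}).toReal /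
          ((μ {ω' | A ω' = A ω ∧ X ω' = X ω}).toReal / (μ {ω' | X ω' = X ω}).toReal)) ∂μ
      = 0 := by
  set F : Ω → ℝ := fun ω => h (A ω) * (Y ω - ψ (A ω)) * stabilizedWeight μ A X (A ω) (X ω)
  change ∫ ω, F ω ∂μ = 0
  by_cases hF : Integrable F μ
  swap
  · exact integral_undef hF
  have hoverlap (a x : ℕ) (hx : μ {ω | X ω = x} ≠ 0) (ha : μ {ω | A ω = a} ≠ 0) :
      μ {ω | A ω = a ∧ X ω = x} ≠ 0 := by
    intro hcell
    have hε' := hpos x (pos_iff_ne_zero.2 hx) a (pos_iff_ne_zero.2 ha)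
    rw [hcell, ENNReal.toReal_zero, zero_div] at hε'
    exact hε.not_ge hε'
  have hcells : HasSum (fun p : ℕ × ℕ => ∫ ω in {ω | A ω = p.1 ∧ X ω = p.2}, F ω ∂μ)
      (∫ ω, F ω ∂μ) := by
    simpa only [Set.preimage, Set.mem_singleton_iff, Prod.ext_iff]
      using hasSum_setIntegral_preimage_singleton (hA.prodMk hX) hF
  have hrows (a : ℕ) : HasSum (fun x => ∫ ω in {ω | A ω = a ∧ X ω = x}, F ω ∂μ) 0 :=
    hasSum_setIntegral_cell_mul_stabilizedWeight hA hX h ψ (hYcf a)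
      (.of_bound (hYcf a).aestronglyMeasurable C (by simpa only [Real.norm_eq_abs] using hYcfbd a))
      (hψ a) hcons (hexch a) (hoverlap a)
  exact (hasSum_zero.unique (hcells.prod_fiberwise hrows)).symm

/-- MSM estimating equation unbiasedness (single time point `t = 1`,
one discrete covariate `X`, discrete treatment `A`, outcome `Y`). If
`ψ(a) = E[Y(a)]` at the true parameter, then under consistency, exchangeability
(`Y(a) ⫫ A | X`) and positivity,
`E[ h(A) · (Y − ψ(A)) · W ] = 0`, where `W = π(A) / π(A | X)` is the stabilized
inverse probability weight. -/
theorem stmt_6 {Ω : Type*} [MeasurableSpace Ω] (μ : Measure Ω) [IsProbabilityMeasure μ]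
    (X A : Ω → ℕ) (Y : Ω → ℝ) (Ycf : ℕ → Ω → ℝ)
    (hX : Measurable X) (hA : Measurable A) (hY : Measurable Y)
    (hYcf : ∀ a, Measurable (Ycf a))
    (h : ℕ → ℝ)              -- arbitrary bounded function of the treatment
    (ψ : ℕ → ℝ)              -- marginal structural model at the true parameter
    (C : ℝ) (hhbd : ∀ a, |h a| ≤ C) (hYbd : ∀ᵐ ω ∂μ, |Y ω| ≤ C)
    (hYcfbd : ∀ a, ∀ᵐ ω ∂μ, |Ycf a ω| ≤ C)
    -- ψ is the true counterfactual mean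
    (hψ : ∀ a, ψ a = ∫ ω, Ycf a ω ∂μ)
    -- consistency: Y = Y(A) a.s.
    (hcons : ∀ᵐ ω ∂μ, Y ω = Ycf (A ω) ω)
    -- exchangeability: Y(a) ⫫ A given X = x
    (hexch : ∀ a x : ℕ, 0 < μ {ω | X ω = x} →
      IndepFun (Ycf a) A (μ[|{ω | X ω = x}]))
    -- positivity: propensity scores bounded below by ε > 0
    (ε : ℝ) (hε : 0 < ε)
    (hpos : ∀ x : ℕ, 0 < μ {ω | X ω = x} → ∀ a : ℕ, 0 < μ {ω | A ω = a} →
      ε ≤ (μ {ω | A ω = a ∧ X ω = x}).toReal / (μ {ω | X ω = x}).toReal) :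
    ∫ ω, h (A ω) * (Y ω - ψ (A ω)) *
        ((μ {ω' | A ω' = A ω}).toReal /
          ((μ {ω' | A ω' = A ω ∧ X ω' = X ω}).toReal / (μ {ω' | X ω' = X ω}).toReal)) ∂μ
      = 0 :=
  stmt_6_general μ X A Y Ycf hX hA hYcf h ψ C hYcfbd hψ hcons hexch ε hε hpos
end

section
/- Copula factorization (Sklar-type density decomposition): if (X1, …, Xd) has a continuous joint density p with strictly increasing continuous marginal cdfs F1, …, Fd and marginal densities p1, …, pd that are strictly positive, then the function c(u1,…,ud) := p(F1^{-1}(u1), …, Fd^{-1}(ud)) / Π_j pj(Fj^{-1}(uj)) is a density on [0,1]^d with uniform marginals, and p(x1,…,xd) = c(F1(x1),…,Fd(xd)) · Π_j pj(xj). -/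
/-!
Write `T x = (F₁ x₁, …, F_d x_d)`. Since `Finv ∘ F = id`, the factorization
`p = (c ∘ T) · ∏ pⱼ` is immediate, and it says that the law of `X` is the product of its
marginal laws reweighted by `c ∘ T`. Each `Fⱼ` pushes the `j`-th marginal law forward to the
uniform law on `(0, 1)` (probability integral transform), so pushing forward by `T` shows that
the law of `T X` is the uniform law on the cube reweighted by `c`, i.e. `ν`. Hence `ν` is a
probability measure, and its `j`-th marginal is the law of `Fⱼ Xⱼ`, which is uniform.
-/

open MeasureTheory Set

open scoped ENNReal

theorem StrictMono.continuousOn_Ioo_of_leftInverse {F G : ℝ → ℝ} {a b : ℝ} (hF : StrictMono F)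
    (hrange : ∀ x, F x ∈ Ioo a b) (hFG : ∀ u ∈ Ioo a b, F (G u) = u)
    (hGF : ∀ x, G (F x) = x) : ContinuousOn G (Ioo a b) := by
  have hG : MonotoneOn G (Ioo a b) := fun u hu v hv huv ↦ by
    rwa [← hF.le_iff_le, hFG u hu, hFG v hv]
  refine fun u hu ↦ (continuousAt_of_monotoneOn_of_image_mem_nhds hG
    (Ioo_mem_nhds hu.1 hu.2) (Filter.mem_of_superset Filter.univ_mem ?_)).continuousWithinAt
  exact fun x _ ↦ ⟨F x, hrange x, hGF x⟩

theorem continuousOn_div_prod_comp {ι : Type*} [Fintype ι] {p : (ι → ℝ) → ℝ}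
    {q G : ι → ℝ → ℝ} {s : Set ℝ} (hp : Continuous p) (hq : ∀ i, Continuous (q i)) (hq0 : ∀ i x, q i x ≠ 0)
    (hG : ∀ i, ContinuousOn (G i) s) :
    ContinuousOn (fun u : ι → ℝ ↦ p (fun i ↦ G i (u i)) / ∏ i, q i (G i (u i)))
      (univ.pi fun _ ↦ s) := by
  have hGu : ContinuousOn (fun u : ι → ℝ ↦ fun i ↦ G i (u i)) (univ.pi fun _ ↦ s) :=
    continuousOn_pi.2 fun i ↦
      (hG i).comp (continuous_apply i).continuousOn fun u hu ↦ hu i (mem_univ i)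
  exact (hp.comp_continuousOn hGu).div
    (continuousOn_finsetProd _ fun i _ ↦ (hq i).comp_continuousOn (continuousOn_pi.1 hGu i))
    fun u _ ↦ Finset.prod_ne_zero_iff.2 fun i _ ↦ hq0 i _

namespace MeasureTheory

theorem lintegral_fin_nat_prod_eq_prod {n : ℕ} {E : Type*} {mE : MeasurableSpace E}
    {μ : Fin n → Measure E} [∀ i, SigmaFinite (μ i)] {f : Fin n → E → ℝ≥0∞}
    (hf : ∀ i, Measurable (f i)) :
    ∫⁻ x : Fin n → E, ∏ i, f i (x i) ∂(Measure.pi μ) = ∏ i, ∫⁻ x, f i x ∂(μ i) := by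
  induction n with
  | zero => simp
  | succ n ih =>
    rw [← (measurePreserving_piFinSuccAbove μ 0).symm.lintegral_comp_emb
      (MeasurableEquiv.measurableEmbedding _)]
    simp_rw [MeasurableEquiv.piFinSuccAbove_symm_apply, Fin.insertNthEquiv,
      Fin.prod_univ_succ, Fin.insertNth_zero]
    simp only [Fin.zero_succAbove, Fin.cons_zero, Fin.cons_succ, Equiv.coe_fn_mk, cast_eq]
    have hprod : Measurable fun y : Fin n → E ↦ ∏ i, f i.succ (y i) := by fun_prop
    rw [lintegral_prod_mul (hf 0).aemeasurable hprod.aemeasurable, ih fun i ↦ hf i.succ]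

variable {ι : Type*} [Fintype ι]

theorem lintegral_fintype_prod_eq_prod {E : Type*} {mE : MeasurableSpace E}
    {μ : ι → Measure E} [∀ i, SigmaFinite (μ i)] {f : ι → E → ℝ≥0∞}
    (hf : ∀ i, Measurable (f i)) :
    ∫⁻ x : ι → E, ∏ i, f i (x i) ∂(Measure.pi μ) = ∏ i, ∫⁻ x, f i x ∂(μ i) := by
  let e := (Fintype.equivFin ι).symm
  rw [← (measurePreserving_piCongrLeft _ e).lintegral_comp_emb
    (MeasurableEquiv.measurableEmbedding _)]
  simp_rw [← e.prod_comp, MeasurableEquiv.coe_piCongrLeft, Equiv.piCongrLeft_apply_apply]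
  exact lintegral_fin_nat_prod_eq_prod fun i ↦ hf (e i)

theorem Measure.pi_withDensity {E : Type*} {mE : MeasurableSpace E}
    {μ : ι → Measure E} [∀ i, SigmaFinite (μ i)] {f : ι → E → ℝ≥0∞} (hf : ∀ i, Measurable (f i))
    [∀ i, SigmaFinite ((μ i).withDensity (f i))] :
    Measure.pi (fun i ↦ (μ i).withDensity (f i)) =
      (Measure.pi μ).withDensity fun x ↦ ∏ i, f i (x i) := by
  refine Measure.pi_eq fun s hs ↦ ?_
  rw [withDensity_apply _ (MeasurableSet.univ_pi hs), Measure.restrict_pi_pi,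
    lintegral_fintype_prod_eq_prod (μ := fun i ↦ (μ i).restrict (s i)) hf]
  exact Finset.prod_congr rfl fun i _ ↦ (withDensity_apply _ (hs i)).symm

theorem map_withDensity_comp {α β : Type*} [MeasurableSpace α] [MeasurableSpace β]
    {μ : Measure α} {T : α → β} (hT : Measurable T) {g : β → ℝ≥0∞}
    (hg : AEMeasurable g (μ.map T)) :
    (μ.withDensity (g ∘ T)).map T = (μ.map T).withDensity g := by
  ext A hA
  rw [Measure.map_apply hT hA, withDensity_apply _ (hT hA), withDensity_apply _ hA,
    Measure.restrict_map hT hA, lintegral_map' _ hT.aemeasurable]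
  · rfl
  · rw [← Measure.restrict_map hT hA]
    exact hg.restrict

theorem withDensity_ofReal_apply {α : Type*} [MeasurableSpace α] {μ : Measure α} {f : α → ℝ}
    (hf : AEStronglyMeasurable f μ) (hf0 : 0 ≤ᵐ[μ] f)
    [IsFiniteMeasure (μ.withDensity fun x ↦ ENNReal.ofReal (f x))]
    {s : Set α} (hs : MeasurableSet s) :
    μ.withDensity (fun x ↦ ENNReal.ofReal (f x)) s = ENNReal.ofReal (∫ x in s, f x ∂μ) := by
  have hint : Integrable f μ := by
    refine ⟨hf, ?_⟩
    rw [hasFiniteIntegral_iff_ofReal hf0, ← setLIntegral_univ, ← withDensity_apply _ .univ]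
    exact measure_lt_top _ _
  rw [withDensity_apply _ hs,
    ofReal_integral_eq_lintegral_ofReal hint.integrableOn (ae_restrict_of_ae hf0)]

theorem map_eq_volume_restrict_Ioo_of_measure_Iic {m : Measure ℝ} [IsProbabilityMeasure m]
    {F : ℝ → ℝ} (hF : StrictMono F) (hrange : ∀ x, F x ∈ Ioo (0 : ℝ) 1)
    (hsurj : Ioo (0 : ℝ) 1 ⊆ range F) (hIic : ∀ x, m (Iic x) = ENNReal.ofReal (F x)) :
    m.map F = volume.restrict (Ioo 0 1) := by
  refine Measure.ext_of_Iic _ _ fun u ↦ ?_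
  rw [Measure.map_apply hF.monotone.measurable measurableSet_Iic,
    Measure.restrict_apply measurableSet_Iic]
  rcases le_or_gt u 0 with hu0 | hu0
  · have hpre : F ⁻¹' Iic u = ∅ :=
      eq_empty_of_forall_notMem fun x hx ↦ ((hrange x).1.trans_le (le_trans hx hu0)).false
    have hint : Iic u ∩ Ioo 0 1 = ∅ :=
      eq_empty_of_forall_notMem fun x hx ↦ (hx.2.1.trans_le (le_trans hx.1 hu0)).false
    rw [hpre, hint, measure_empty, measure_empty]
  rcases lt_or_ge u 1 with hu1 | hu1
  · obtain ⟨x, rfl⟩ := hsurj ⟨hu0, hu1⟩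
    have hpre : F ⁻¹' Iic (F x) = Iic x := ext fun y ↦ hF.le_iff_le
    have hint : Iic (F x) ∩ Ioo 0 1 = Ioc 0 (F x) :=
      ext fun y ↦ ⟨fun h ↦ ⟨h.2.1, h.1⟩, fun h ↦ ⟨h.2, h.1, h.2.trans_lt hu1⟩⟩
    rw [hpre, hint, hIic, Real.volume_Ioc, sub_zero]
  · have hpre : F ⁻¹' Iic u = univ := eq_univ_of_forall fun x ↦ ((hrange x).2.trans_le hu1).le
    have hint : Iic u ∩ Ioo 0 1 = Ioo 0 1 := inter_eq_right.2 fun x hx ↦ (hx.2.trans_le hu1).le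
    rw [hpre, hint, measure_univ, Real.volume_Ioo, sub_zero, ENNReal.ofReal_one]

theorem map_withDensity_eq_volume_restrict_Ioo_of_cdf {f F : ℝ → ℝ}
    (hf : AEStronglyMeasurable f) (hf0 : ∀ x, 0 ≤ f x)
    [IsProbabilityMeasure (volume.withDensity fun x ↦ ENNReal.ofReal (f x))]
    (hF : ∀ x, F x = ∫ t in Iic x, f t) (hFmono : StrictMono F)
    (hrange : ∀ x, F x ∈ Ioo (0 : ℝ) 1) (hsurj : Ioo (0 : ℝ) 1 ⊆ range F) :
    (volume.withDensity fun x ↦ ENNReal.ofReal (f x)).map F = volume.restrict (Ioo 0 1) :=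
  map_eq_volume_restrict_Ioo_of_measure_Iic hFmono hrange hsurj fun x ↦ by
    rw [hF, withDensity_ofReal_apply hf (ae_of_all _ hf0) measurableSet_Iic]

theorem map_withDensity_eq_pi_withDensity_of_factorization
    {p c : (ι → ℝ) → ℝ} {q F : ι → ℝ → ℝ} {ν : ι → Measure ℝ} [∀ i, SigmaFinite (ν i)]
    (hq : ∀ i, Measurable (q i)) (hq0 : ∀ i x, 0 ≤ q i x)
    [∀ i, SigmaFinite (volume.withDensity fun x ↦ ENNReal.ofReal (q i x))]
    (hF : ∀ i, Measurable (F i))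
    (hpush : ∀ i, (volume.withDensity fun x ↦ ENNReal.ofReal (q i x)).map (F i) = ν i)
    (hc : AEMeasurable c (Measure.pi ν)) (hcT : Measurable fun x : ι → ℝ ↦ c fun i ↦ F i (x i))
    (hfact : ∀ x, p x = c (fun i ↦ F i (x i)) * ∏ i, q i (x i)) :
    (volume.withDensity fun x ↦ ENNReal.ofReal (p x)).map (fun x i ↦ F i (x i)) =
      (Measure.pi ν).withDensity fun u ↦ ENNReal.ofReal (c u) := by
  set T : (ι → ℝ) → ι → ℝ := fun x i ↦ F i (x i)
  have hT : Measurable T := by fun_prop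
  have hmap : (Measure.pi fun i ↦ volume.withDensity fun x ↦ ENNReal.ofReal (q i x)).map T =
      Measure.pi ν := (measurePreserving_pi _ ν fun i ↦ ⟨hF i, hpush i⟩).map_eq
  have hdens : volume.withDensity (fun x ↦ ENNReal.ofReal (p x)) =
      (Measure.pi fun i ↦ volume.withDensity fun x ↦ ENNReal.ofReal (q i x)).withDensity
        ((fun u ↦ ENNReal.ofReal (c u)) ∘ T) := by
    have hprod : Measurable fun x : ι → ℝ ↦ ∏ i, ENNReal.ofReal (q i (x i)) := by fun_prop
    rw [Measure.pi_withDensity fun i ↦ (hq i).ennreal_ofReal, ← volume_pi,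
      ← withDensity_mul _ hprod (g := (fun u ↦ ENNReal.ofReal (c u)) ∘ T) hcT.ennreal_ofReal]
    congr 1 with x
    rw [hfact, mul_comm, Pi.mul_apply, ENNReal.ofReal_mul (Finset.prod_nonneg fun i _ ↦ hq0 i _),
      ENNReal.ofReal_prod_of_nonneg fun i _ ↦ hq0 i _]
    rfl
  rw [hdens, map_withDensity_comp hT (hmap ▸ hc.ennreal_ofReal), hmap]

end MeasureTheory

theorem stmt_8_general {d : ℕ} {Ω : Type*} [MeasurableSpace Ω]
    (μ : Measure Ω) [IsProbabilityMeasure μ]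
    (Xv : Ω → (Fin d → ℝ)) (hXv : Measurable Xv)
    (p : (Fin d → ℝ) → ℝ) (pj : Fin d → ℝ → ℝ) (F Finv : Fin d → ℝ → ℝ)
    -- joint density: continuous, strictly positive, density of the law of Xv
    (hpc : Continuous p)
    (hjoint : Measure.map Xv μ = volume.withDensity (fun x => ENNReal.ofReal (p x)))
    -- marginal densities: continuous, strictly positive, densities of coordinates
    (hpjc : ∀ j, Continuous (pj j)) (hpjpos : ∀ j x, 0 < pj j x)
    (hmarg : ∀ j, Measure.map (fun ω => Xv ω j) μ =
      volume.withDensity (fun x => ENNReal.ofReal (pj j x)))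
    -- cdfs and their inverses
    (hF : ∀ j x, F j x = ∫ t in Set.Iic x, pj j t)
    (hFmono : ∀ j, StrictMono (F j))
    (hFrange : ∀ j x, F j x ∈ Set.Ioo (0 : ℝ) 1)
    (hFinv : ∀ j, ∀ u ∈ Set.Ioo (0 : ℝ) 1, F j (Finv j u) = u)
    (hinvF : ∀ j x, Finv j (F j x) = x) :
    -- the copula density
    let c : (Fin d → ℝ) → ℝ :=
      fun u => p (fun j => Finv j (u j)) / ∏ j, pj j (Finv j (u j))
    let ν : Measure (Fin d → ℝ) :=
      ((volume : Measure (Fin d → ℝ)).restrict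
          (Set.univ.pi fun _ => Set.Ioo (0 : ℝ) 1)).withDensity
        (fun u => ENNReal.ofReal (c u))
    -- (a) c is a probability density on the unit cube …
    IsProbabilityMeasure ν ∧
    -- … with uniform univariate marginals
    (∀ j, Measure.map (fun u => u j) ν = volume.restrict (Set.Ioo (0 : ℝ) 1)) ∧
    -- (b) the density factorizes through the copula
    (∀ x : Fin d → ℝ, p x = c (fun j => F j (x j)) * ∏ j, pj j (x j)) := by
  intro c ν
  set T : (Fin d → ℝ) → Fin d → ℝ := fun x j ↦ F j (x j)
  have hXj : ∀ j, Measurable fun ω ↦ Xv ω j := fun j ↦ (measurable_pi_apply j).comp hXv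
  have hFm : ∀ j, Measurable (F j) := fun j ↦ (hFmono j).monotone.measurable
  have hT : Measurable T := by fun_prop
  have hcT : ∀ x, c (T x) = p x / ∏ j, pj j (x j) := fun x ↦ by simp only [c, T, hinvF]
  have hfact : ∀ x, p x = c (T x) * ∏ j, pj j (x j) := fun x ↦ by
    rw [hcT, div_mul_cancel₀ _ (Finset.prod_pos fun j _ ↦ hpjpos j _).ne']
  have hcTm : Measurable fun x ↦ c (T x) := by simp only [hcT]; fun_prop
  have hm : ∀ j, IsProbabilityMeasure (volume.withDensity fun x ↦ ENNReal.ofReal (pj j x)) :=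
    fun j ↦ hmarg j ▸ Measure.isProbabilityMeasure_map (hXj j).aemeasurable
  have hpush j := map_withDensity_eq_volume_restrict_Ioo_of_cdf (hpjc j).aestronglyMeasurable
    (fun x ↦ (hpjpos j x).le) (hF j) (hFmono j) (hFrange j) fun u hu ↦ ⟨Finv j u, hFinv j u hu⟩
  have hc : AEMeasurable c (Measure.pi fun _ ↦ volume.restrict (Ioo (0 : ℝ) 1)) := by
    rw [← Measure.restrict_pi_pi, ← volume_pi]
    refine ContinuousOn.aemeasurable ?_ (MeasurableSet.univ_pi fun _ ↦ measurableSet_Ioo)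
    exact continuousOn_div_prod_comp hpc hpjc (fun j x ↦ (hpjpos j x).ne') fun j ↦
      (hFmono j).continuousOn_Ioo_of_leftInverse (hFrange j) (hFinv j) (hinvF j)
  have hν : ν = μ.map (T ∘ Xv) := by
    rw [← Measure.map_map hT hXv, hjoint, map_withDensity_eq_pi_withDensity_of_factorization
      (fun j ↦ (hpjc j).measurable) (fun j x ↦ (hpjpos j x).le) hFm hpush hc hcTm hfact,
      ← Measure.restrict_pi_pi, ← volume_pi]
  refine ⟨hν ▸ Measure.isProbabilityMeasure_map (hT.comp hXv).aemeasurable, fun j ↦ ?_, hfact⟩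
  rw [hν, Measure.map_map (measurable_pi_apply j) (hT.comp hXv), ← hpush j, ← hmarg j,
    Measure.map_map (hFm j) (hXj j)]
  rfl

/-- Copula factorization (Sklar-type density decomposition). If
`(X1,…,Xd)` has a continuous strictly positive joint density `p` with strictly
increasing continuous marginal cdfs `F j` and strictly positive continuous marginal
densities `pj j`, then
`c(u) := p(F₁⁻¹(u₁),…,F_d⁻¹(u_d)) / ∏ j pj j (F j⁻¹ (u j))`
is a probability density on the unit cube with uniform marginals, and
`p(x) = c(F₁(x₁),…,F_d(x_d)) · ∏ j pj j (x j)`. -/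
theorem stmt_8 {d : ℕ} {Ω : Type*} [MeasurableSpace Ω]
    (μ : Measure Ω) [IsProbabilityMeasure μ]
    (Xv : Ω → (Fin d → ℝ)) (hXv : Measurable Xv)
    (p : (Fin d → ℝ) → ℝ) (pj : Fin d → ℝ → ℝ) (F Finv : Fin d → ℝ → ℝ)
    -- joint density: continuous, strictly positive, density of the law of Xv
    (hpc : Continuous p) (hppos : ∀ x, 0 < p x)
    (hjoint : Measure.map Xv μ = volume.withDensity (fun x => ENNReal.ofReal (p x)))
    -- marginal densities: continuous, strictly positive, densities of coordinates
    (hpjc : ∀ j, Continuous (pj j)) (hpjpos : ∀ j x, 0 < pj j x)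
    (hmarg : ∀ j, Measure.map (fun ω => Xv ω j) μ =
      volume.withDensity (fun x => ENNReal.ofReal (pj j x)))
    -- cdfs and their inverses
    (hF : ∀ j x, F j x = ∫ t in Set.Iic x, pj j t)
    (hFmono : ∀ j, StrictMono (F j))
    (hFrange : ∀ j x, F j x ∈ Set.Ioo (0 : ℝ) 1)
    (hFinv : ∀ j, ∀ u ∈ Set.Ioo (0 : ℝ) 1, F j (Finv j u) = u)
    (hinvF : ∀ j x, Finv j (F j x) = x) :
    -- the copula density
    let c : (Fin d → ℝ) → ℝ :=
      fun u => p (fun j => Finv j (u j)) / ∏ j, pj j (Finv j (u j))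
    let ν : Measure (Fin d → ℝ) :=
      ((volume : Measure (Fin d → ℝ)).restrict
          (Set.univ.pi fun _ => Set.Ioo (0 : ℝ) 1)).withDensity
        (fun u => ENNReal.ofReal (c u))
    -- (a) c is a probability density on the unit cube …
    IsProbabilityMeasure ν ∧
    -- … with uniform univariate marginals
    (∀ j, Measure.map (fun u => u j) ν = volume.restrict (Set.Ioo (0 : ℝ) 1)) ∧
    -- (b) the density factorizes through the copula
    (∀ x : Fin d → ℝ, p x = c (fun j => F j (x j)) * ∏ j, pj j (x j)) :=
  stmt_8_general μ Xv hXv p pj F Finv hpc hjoint hpjc hpjpos hmarg hF hFmono hFrange hFinv hinvF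
end

section
/- In a linear structural equation model where treatments have no direct path to the outcome, ordinary least squares / MLE coefficients on treatment are biased by collider stratification: in the model X1 = αU·U + αA·A0 + ε1, A1 = γX·X1 + γA·A0 + η1, I1 = βA·A1 + βX·X1 + βU·U + ζ1 with all noises and U independent mean-zero, the coefficient of A1 in the best linear predictor of I1 given (A1, X1, A0) equals βA, but the coefficient of A1 in the best linear predictor of I1 given only (A1, X1) differs from βA whenever βU·αA·αU ≠ 0 and appropriate nondegeneracy holds. -/
/-!
Independence and centring make `U, A0, ε1, η1, ζ1` orthogonal in `L²`, so every normal equation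
becomes an identity between coordinates in this basis, weighted by the second moments.

With `A0` among the regressors, `A1 - γX • X1 - γA • A0 = η1`, so the residual is orthogonal to
`η1`; its `η1`-coordinate is `βA - b1`, hence `b1 = βA`. Without `A0`, subtracting `γX` times the
`X1`-equation from the `A1`-equation leaves `γA αA E[A0²] (βX - c2) = 0`, so `c2 = βX`; were also
`c1 = βA`, the residual would be `βU U + ζ1`, whose correlation with `X1` is `βU αU E[U²] ≠ 0`.
-/

open MeasureTheory ProbabilityTheory

namespace ProbabilityTheory.iIndepFun

variable {Ω ι : Type*} [MeasurableSpace Ω] {μ : Measure Ω} {f : ι → Ω → ℝ}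

theorem integral_mul_eq_ite [DecidableEq ι] (hf : iIndepFun f μ) (h2 : ∀ i, MemLp (f i) 2 μ)
    (h0 : ∀ i, ∫ ω, f i ω ∂μ = 0) (i j : ι) :
    ∫ ω, f i ω * f j ω ∂μ = if i = j then ∫ ω, f i ω ^ 2 ∂μ else 0 := by
  split_ifs with hij
  · simp [hij, sq]
  · rw [(hf.indepFun hij).integral_fun_mul_eq_mul_integral (h2 i).aestronglyMeasurable
      (h2 j).aestronglyMeasurable, h0 i, zero_mul]

theorem integrable_mul [IsFiniteMeasure μ] (hf : iIndepFun f μ) (h2 : ∀ i, MemLp (f i) 2 μ)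
    (i j : ι) : Integrable (fun ω ↦ f i ω * f j ω) μ := by
  by_cases hij : i = j
  · subst hij; simpa [sq] using (h2 i).integrable_sq
  · exact (hf.indepFun hij).integrable_mul ((h2 i).integrable one_le_two)
      ((h2 j).integrable one_le_two)

theorem integral_mul_eq_sum [Fintype ι] [IsFiniteMeasure μ] (hf : iIndepFun f μ)
    (h2 : ∀ i, MemLp (f i) 2 μ) (h0 : ∀ i, ∫ ω, f i ω ∂μ = 0) {Y Z : Ω → ℝ} {a b : ι → ℝ}
    (hY : ∀ ω, Y ω = ∑ i, a i * f i ω) (hZ : ∀ ω, Z ω = ∑ j, b j * f j ω) :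
    ∫ ω, Y ω * Z ω ∂μ = ∑ i, a i * b i * ∫ ω, f i ω ^ 2 ∂μ := by
  classical
  have hterm : ∀ i j, ∫ ω, a i * f i ω * (b j * f j ω) ∂μ
      = if i = j then a i * b i * ∫ ω, f i ω ^ 2 ∂μ else 0 := fun i j ↦ by
    simp_rw [mul_mul_mul_comm (a i) (f i _)]
    rw [integral_const_mul, hf.integral_mul_eq_ite h2 h0]
    split_ifs with hij <;> simp [hij]
  have hint : ∀ i j, Integrable (fun ω ↦ a i * f i ω * (b j * f j ω)) μ := fun i j ↦ by
    simpa only [mul_mul_mul_comm (a i)] using (hf.integrable_mul h2 i j).const_mul (a i * b j)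
  simp_rw [hY, hZ, Finset.sum_mul_sum]
  rw [integral_finsetSum _ fun i _ ↦ integrable_finsetSum _ fun j _ ↦ hint i j]
  refine Finset.sum_congr rfl fun i _ ↦ ?_
  rw [integral_finsetSum _ fun j _ ↦ hint i j]
  simp [hterm]

end ProbabilityTheory.iIndepFun

theorem stmt_19_general {Ω : Type*} [MeasurableSpace Ω] (μ : Measure Ω) [IsProbabilityMeasure μ]
    (U A0 ε1 η1 ζ1 : Ω → ℝ)
    (αU αA γX γA βA βX βU : ℝ)
    (X1 A1 I1 : Ω → ℝ)
    -- independence of the exogenous variables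
    (hindep : iIndepFun ![U, A0, ε1, η1, ζ1] μ)
    -- measurability and square integrability
    (hU2 : MemLp U 2 μ) (hA02 : MemLp A0 2 μ) (hε12 : MemLp ε1 2 μ)
    (hη12 : MemLp η1 2 μ) (hζ12 : MemLp ζ1 2 μ)
    -- mean zero
    (hUmean : ∫ ω, U ω ∂μ = 0) (hA0mean : ∫ ω, A0 ω ∂μ = 0)
    (hε1mean : ∫ ω, ε1 ω ∂μ = 0) (hη1mean : ∫ ω, η1 ω ∂μ = 0)
    (hζ1mean : ∫ ω, ζ1 ω ∂μ = 0)
    -- strictly positive variances (nondegeneracy)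
    (hUvar : 0 < ∫ ω, (U ω) ^ 2 ∂μ) (hA0var : 0 < ∫ ω, (A0 ω) ^ 2 ∂μ)
    (hη1var : 0 < ∫ ω, (η1 ω) ^ 2 ∂μ)
    -- the structural equations
    (hX1 : ∀ ω, X1 ω = αU * U ω + αA * A0 ω + ε1 ω)
    (hA1 : ∀ ω, A1 ω = γX * X1 ω + γA * A0 ω + η1 ω)
    (hI1 : ∀ ω, I1 ω = βA * A1 ω + βX * X1 ω + βU * U ω + ζ1 ω) :
    -- (1) regressing I1 on (A1, X1, A0): the A1-coefficient is βA
    (∀ b1 b2 b3 : ℝ,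
      (∫ ω, (I1 ω - b1 * A1 ω - b2 * X1 ω - b3 * A0 ω) * A1 ω ∂μ = 0) →
      (∫ ω, (I1 ω - b1 * A1 ω - b2 * X1 ω - b3 * A0 ω) * X1 ω ∂μ = 0) →
      (∫ ω, (I1 ω - b1 * A1 ω - b2 * X1 ω - b3 * A0 ω) * A0 ω ∂μ = 0) →
      b1 = βA) ∧
    -- (2) regressing I1 on (A1, X1) only: the A1-coefficient is biased
    (βU * αA * αU ≠ 0 → γA ≠ 0 →
      ∀ c1 c2 : ℝ,
        (∫ ω, (I1 ω - c1 * A1 ω - c2 * X1 ω) * A1 ω ∂μ = 0) →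
        (∫ ω, (I1 ω - c1 * A1 ω - c2 * X1 ω) * X1 ω ∂μ = 0) →
        c1 ≠ βA) := by
  have moment : ∀ {Y Z : Ω → ℝ} {a₀ a₁ a₂ a₃ a₄ b₀ b₁ b₂ b₃ b₄ : ℝ},
      (∀ ω, Y ω = a₀ * U ω + a₁ * A0 ω + a₂ * ε1 ω + a₃ * η1 ω + a₄ * ζ1 ω) →
      (∀ ω, Z ω = b₀ * U ω + b₁ * A0 ω + b₂ * ε1 ω + b₃ * η1 ω + b₄ * ζ1 ω) →
      ∫ ω, Y ω * Z ω ∂μ = a₀ * b₀ * ∫ ω, U ω ^ 2 ∂μ + a₁ * b₁ * ∫ ω, A0 ω ^ 2 ∂μ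
        + a₂ * b₂ * ∫ ω, ε1 ω ^ 2 ∂μ + a₃ * b₃ * ∫ ω, η1 ω ^ 2 ∂μ
        + a₄ * b₄ * ∫ ω, ζ1 ω ^ 2 ∂μ := fun {Y Z a₀ a₁ a₂ a₃ a₄ b₀ b₁ b₂ b₃ b₄} hY hZ ↦ by
    have h := hindep.integral_mul_eq_sum (Y := Y) (Z := Z) (a := ![a₀, a₁, a₂, a₃, a₄])
      (b := ![b₀, b₁, b₂, b₃, b₄]) (fun i ↦ by fin_cases i <;> assumption)
      (fun i ↦ by fin_cases i <;> assumption) (fun ω ↦ by simp [hY, Fin.sum_univ_five])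
      (fun ω ↦ by simp [hZ, Fin.sum_univ_five])
    simpa [Fin.sum_univ_five, add_assoc] using h
  have hA : ∀ ω, A1 ω = γX * αU * U ω + (γX * αA + γA) * A0 ω + γX * ε1 ω + 1 * η1 ω + 0 * ζ1 ω :=
    fun ω ↦ by rw [hA1, hX1]; ring
  have hX : ∀ ω, X1 ω = αU * U ω + αA * A0 ω + 1 * ε1 ω + 0 * η1 ω + 0 * ζ1 ω :=
    fun ω ↦ by rw [hX1]; ring
  have hA0 : ∀ ω, A0 ω = 0 * U ω + 1 * A0 ω + 0 * ε1 ω + 0 * η1 ω + 0 * ζ1 ω :=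
    fun ω ↦ by ring
  refine ⟨fun b1 b2 b3 nA1 nX1 nA0 ↦ ?_, fun hβ hγ c1 c2 nA1 nX1 hc ↦ ?_⟩
  · obtain ⟨r₀, r₁, r₂, hr⟩ : ∃ r₀ r₁ r₂ : ℝ, ∀ ω, I1 ω - b1 * A1 ω - b2 * X1 ω - b3 * A0 ω
        = r₀ * U ω + r₁ * A0 ω + r₂ * ε1 ω + (βA - b1) * η1 ω + 1 * ζ1 ω :=
      ⟨(βA - b1) * γX * αU + (βX - b2) * αU + βU, (βA - b1) * (γX * αA + γA) + (βX - b2) * αA - b3,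
        (βA - b1) * γX + βX - b2, fun ω ↦ by rw [hI1, hA1, hX1]; ring⟩
    rw [moment hr hA] at nA1
    rw [moment hr hX] at nX1
    rw [moment hr hA0] at nA0
    have h : (βA - b1) * ∫ ω, η1 ω ^ 2 ∂μ = 0 := by linear_combination nA1 - γX * nX1 - γA * nA0
    have := (mul_eq_zero.1 h).resolve_right hη1var.ne'
    linarith
  · subst c1
    have hr : ∀ ω, I1 ω - βA * A1 ω - c2 * X1 ω = ((βX - c2) * αU + βU) * U ω
        + (βX - c2) * αA * A0 ω + (βX - c2) * ε1 ω + 0 * η1 ω + 1 * ζ1 ω :=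
      fun ω ↦ by rw [hI1, hX1]; ring
    rw [moment hr hA] at nA1
    rw [moment hr hX] at nX1
    have hαA : αA ≠ 0 := right_ne_zero_of_mul (left_ne_zero_of_mul hβ)
    have hc2 : c2 = βX := by
      have h : γA * αA * (∫ ω, A0 ω ^ 2 ∂μ) * (βX - c2) = 0 := by linear_combination nA1 - γX * nX1
      have := (mul_eq_zero.1 h).resolve_left (mul_ne_zero (mul_ne_zero hγ hαA) hA0var.ne')
      linarith
    subst hc2
    exact mul_ne_zero hβ hUvar.ne' (by linear_combination αA * nX1)

/-- Collider-stratification (phantom) bias of least squares. In the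
linear structural model
`X1 = αU·U + αA·A0 + ε1`, `A1 = γX·X1 + γA·A0 + η1`,
`I1 = βA·A1 + βX·X1 + βU·U + ζ1`,
with `U, A0, ε1, η1, ζ1` independent, mean zero, in L², with strictly positive
variances, the coefficient of `A1` in the (population) best linear predictor of
`I1` given `(A1, X1, A0)` equals `βA`; but any best-linear-predictor coefficient
of `A1` given only `(A1, X1)` differs from `βA` whenever `βU·αA·αU ≠ 0` (and the
nondegeneracy condition `γA ≠ 0` holds). -/
theorem stmt_19 {Ω : Type*} [MeasurableSpace Ω] (μ : Measure Ω) [IsProbabilityMeasure μ]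
    (U A0 ε1 η1 ζ1 : Ω → ℝ)
    (αU αA γX γA βA βX βU : ℝ)
    (X1 A1 I1 : Ω → ℝ)
    -- independence of the exogenous variables
    (hindep : iIndepFun ![U, A0, ε1, η1, ζ1] μ)
    -- measurability and square integrability
    (hUm : Measurable U) (hA0m : Measurable A0) (hε1m : Measurable ε1)
    (hη1m : Measurable η1) (hζ1m : Measurable ζ1)
    (hU2 : MemLp U 2 μ) (hA02 : MemLp A0 2 μ) (hε12 : MemLp ε1 2 μ)
    (hη12 : MemLp η1 2 μ) (hζ12 : MemLp ζ1 2 μ)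
    -- mean zero
    (hUmean : ∫ ω, U ω ∂μ = 0) (hA0mean : ∫ ω, A0 ω ∂μ = 0)
    (hε1mean : ∫ ω, ε1 ω ∂μ = 0) (hη1mean : ∫ ω, η1 ω ∂μ = 0)
    (hζ1mean : ∫ ω, ζ1 ω ∂μ = 0)
    -- strictly positive variances (nondegeneracy)
    (hUvar : 0 < ∫ ω, (U ω) ^ 2 ∂μ) (hA0var : 0 < ∫ ω, (A0 ω) ^ 2 ∂μ)
    (hε1var : 0 < ∫ ω, (ε1 ω) ^ 2 ∂μ) (hη1var : 0 < ∫ ω, (η1 ω) ^ 2 ∂μ)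
    (hζ1var : 0 < ∫ ω, (ζ1 ω) ^ 2 ∂μ)
    -- the structural equations
    (hX1 : ∀ ω, X1 ω = αU * U ω + αA * A0 ω + ε1 ω)
    (hA1 : ∀ ω, A1 ω = γX * X1 ω + γA * A0 ω + η1 ω)
    (hI1 : ∀ ω, I1 ω = βA * A1 ω + βX * X1 ω + βU * U ω + ζ1 ω) :
    -- (1) regressing I1 on (A1, X1, A0): the A1-coefficient is βA
    (∀ b1 b2 b3 : ℝ,
      (∫ ω, (I1 ω - b1 * A1 ω - b2 * X1 ω - b3 * A0 ω) * A1 ω ∂μ = 0) →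
      (∫ ω, (I1 ω - b1 * A1 ω - b2 * X1 ω - b3 * A0 ω) * X1 ω ∂μ = 0) →
      (∫ ω, (I1 ω - b1 * A1 ω - b2 * X1 ω - b3 * A0 ω) * A0 ω ∂μ = 0) →
      b1 = βA) ∧
    -- (2) regressing I1 on (A1, X1) only: the A1-coefficient is biased
    (βU * αA * αU ≠ 0 → γA ≠ 0 →
      ∀ c1 c2 : ℝ,
        (∫ ω, (I1 ω - c1 * A1 ω - c2 * X1 ω) * A1 ω ∂μ = 0) →
        (∫ ω, (I1 ω - c1 * A1 ω - c2 * X1 ω) * X1 ω ∂μ = 0) →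
        c1 ≠ βA) :=
  stmt_19_general μ U A0 ε1 η1 ζ1 αU αA γX γA βA βX βU X1 A1 I1 hindep hU2 hA02 hε12 hη12 hζ12
    hUmean hA0mean hε1mean hη1mean hζ1mean hUvar hA0var hη1var hX1 hA1 hI1
end
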